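/- Let (T,⊗) be an M-compatible tensor triangulated category and let E be a split generator of T. Then a thick subcategory P of T is a prime ⊗-ideal if and only if P is a prime thick subcategory satisfying {M ∈ T : M ⊗ E ∈ P} = P (i.e., P is fixed by the endofunctor − ⊗ E). -/
import Mathlib


open CategoryTheory Limits Pretriangulated MonoidalCategory

universe v u

namespace PaperTT

variable (C : Type u) [Category.{v} C] [HasZeroObject C] [HasShift C ℤ]
  [Preadditive C] [∀ n : ℤ, (shiftFunctor C n).Additive] [Pretriangulated C]

/-- A thick subcategory of a (pre)triangulated category, encoded as the set of its objects:
it contains the zero objects, is closed under isomorphisms, shifts, extensions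
(two-out-of-three for distinguished triangles) and direct summands (retracts). -/
def IsThickSubcategory (S : Set C) : Prop :=
  (∀ Z : C, IsZero Z → Z ∈ S) ∧
  (∀ ⦃X Y : C⦄, (X ≅ Y) → X ∈ S → Y ∈ S) ∧
  (∀ (X : C) (n : ℤ), X ∈ S → (shiftFunctor C n).obj X ∈ S) ∧
  (∀ T ∈ distTriang C, T.obj₁ ∈ S → T.obj₃ ∈ S → T.obj₂ ∈ S) ∧
  (∀ (X Y : C) (i : X ⟶ Y) (r : Y ⟶ X), i ≫ r = 𝟙 X → Y ∈ S → X ∈ S)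

/-- A prime thick subcategory: a thick subcategory `S` such that the poset of thick
subcategories strictly containing `S` has a smallest element. -/
def IsPrimeThickSubcategory (S : Set C) : Prop :=
  IsThickSubcategory C S ∧
    ∃ Q : Set C, IsThickSubcategory C Q ∧ S ⊂ Q ∧
      ∀ R : Set C, IsThickSubcategory C R → S ⊂ R → Q ⊆ R

variable [MonoidalCategory C]

/-- The ⊗-ideal condition for a subcategory: `M ⊗ N ∈ S` for all `M` and all `N ∈ S`. -/
def IsTensorIdealSet (S : Set C) : Prop :=
  ∀ (M N : C), N ∈ S → M ⊗ N ∈ S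

/-- A thick ⊗-ideal. -/
def IsTensorIdeal (S : Set C) : Prop :=
  IsThickSubcategory C S ∧ IsTensorIdealSet C S

/-- A prime ⊗-ideal: a proper thick ⊗-ideal `S` with `M ⊗ N ∈ S → M ∈ S ∨ N ∈ S`. -/
def IsPrimeTensorIdeal (S : Set C) : Prop :=
  IsTensorIdeal C S ∧ S ≠ Set.univ ∧ ∀ (M N : C), M ⊗ N ∈ S → M ∈ S ∨ N ∈ S

/-- `M`-compatibility: a thick subcategory is a prime ⊗-ideal iff it is
a prime thick subcategory that is a ⊗-ideal. -/
def MCompatible : Prop :=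
  ∀ S : Set C, IsPrimeTensorIdeal C S ↔
    (IsPrimeThickSubcategory C S ∧ IsTensorIdealSet C S)

/-- Nonnegative tensor powers of an object; `npow L 0 = 𝟙_ C`. -/
def npow (L : C) : ℕ → C
  | 0 => 𝟙_ C
  | n + 1 => npow L n ⊗ L

/-- Integer tensor powers of an object `L`, the negative powers being the positive
powers of a chosen tensor inverse `L'` of `L`. -/
def zpow (L L' : C) : ℤ → C
  | Int.ofNat n => npow C L n
  | Int.negSucc n => npow C L' (n + 1)

/-- The preimage of a thick subcategory under a triangulated functor is thick. -/
lemma isThickSubcategory_preimage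
    {C : Type u} [Category.{v} C] [HasZeroObject C] [HasShift C ℤ]
    [Preadditive C] [∀ n : ℤ, (shiftFunctor C n).Additive] [Pretriangulated C]
    (F : C ⥤ C) [F.CommShift ℤ] [F.IsTriangulated]
    (P : Set C) (hP : IsThickSubcategory C P) :
    IsThickSubcategory C {M : C | F.obj M ∈ P} := by
  obtain ⟨hz, hiso, hshift, htri, hretract⟩ := hP
  refine ⟨?_, ?_, ?_, ?_, ?_⟩
  · intro Z hZ
    exact hz _ (F.map_isZero hZ)
  · intro X Y e hX
    exact hiso (F.mapIso e) hX
  · intro X n hX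
    exact hiso ((F.commShiftIso n).symm.app X) (hshift _ n hX)
  · intro T hT h1 h3
    exact htri _ (F.map_distinguished T hT) h1 h3
  · intro X Y i r hir hY
    refine hretract _ _ (F.map i) (F.map r) ?_ hY
    rw [← F.map_comp, hir, F.map_id]


/-- Let `(C,⊗)` be an `M`-compatible symmetric tensor triangulated category
(the tensor product being triangulated in each variable) with a split generator `E`.
Then a thick subcategory `P` is a prime ⊗-ideal if and only if it is a prime thick
subcategory fixed by the endofunctor `- ⊗ E`, i.e. `{M : M ⊗ E ∈ P} = P`. -/
theorem balmer_spectrum_eq_pt_spectrum_of_split_generator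
    (C : Type u) [Category.{v} C] [HasZeroObject C] [HasShift C ℤ]
    [Preadditive C] [∀ n : ℤ, (shiftFunctor C n).Additive] [Pretriangulated C]
    [MonoidalCategory C] [SymmetricCategory C]
    [∀ N : C, (tensorLeft N).CommShift ℤ] [∀ N : C, (tensorLeft N).IsTriangulated]
    [∀ N : C, (tensorRight N).CommShift ℤ] [∀ N : C, (tensorRight N).IsTriangulated]
    (hM : MCompatible C)
    (E : C)
    (hE : ∀ S : Set C, IsThickSubcategory C S → E ∈ S → S = Set.univ)
    (P : Set C) :
    IsPrimeTensorIdeal C P ↔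
      (IsPrimeThickSubcategory C P ∧ {M : C | M ⊗ E ∈ P} = P) := by
  constructor
  · rintro hPT
    obtain ⟨hPprime, hPideal⟩ := (hM P).mp hPT
    refine ⟨hPprime, ?_⟩
    obtain ⟨⟨hthick, hideal⟩, hproper, hprimecond⟩ := hPT
    ext M
    simp only [Set.mem_setOf_eq]
    constructor
    · intro hME
      rcases hprimecond M E hME with hMP | hEP
      · exact hMP
      · exact absurd (hE P hthick hEP) hproper
    · intro hMP
      exact hthick.2.1 (β_ E M) (hideal E M hMP)
  · rintro ⟨hPprime, hfix⟩
    refine (hM P).mpr ⟨hPprime, ?_⟩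
    intro M N hN
    have hthick := hPprime.1
    have hSthick : IsThickSubcategory C {X : C | (tensorRight N).obj X ∈ P} :=
      isThickSubcategory_preimage (tensorRight N) P hthick
    have hES : E ∈ {X : C | (tensorRight N).obj X ∈ P} := by
      have hNE : N ⊗ E ∈ P := by
        rw [← hfix] at hN
        exact hN
      exact hthick.2.1 (β_ N E) hNE
    have := hE _ hSthick hES
    have hMmem : M ∈ {X : C | (tensorRight N).obj X ∈ P} := by
      rw [this]; trivial
    exact hMmem

end PaperTT
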